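/- Let p be a prime, let M, M̃ ∈ M_n(ℤ) be expanding matrices and D, D̃ ⊂ ℤ^n finite digit sets, and let A, B ∈ M_n(ℤ) have determinants not divisible by p with AB ≡ I (mod p), M̃ = AMB and D = B D̃. If Z_{D̃}^n ⊆ E̊_p^n, then there exists an integer j ≥ 1 with (M^t)^j Z_D^n ∩ ℤ^n ≠ ∅ if and only if there exists an integer j̃ ≥ 1 with (M̃^t)^{j̃} Z_{D̃}^n ∩ ℤ^n ≠ ∅. -/

import Mathlib

open MeasureTheory Matrix Set Complex
open scoped Real Pointwise ENNReal

noncomputable section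

namespace SA

variable {n : ℕ}

/-- Cast an integer matrix to a real matrix. -/
def toR (M : Matrix (Fin n) (Fin n) ℤ) : Matrix (Fin n) (Fin n) ℝ :=
  M.map (Int.cast : ℤ → ℝ)

/-- Cast an integer vector to a real vector. -/
def vecR (d : Fin n → ℤ) : Fin n → ℝ := fun i => (d i : ℝ)

/-- A real matrix is expanding if all of its complex eigenvalues have modulus > 1. -/
def IsExpandingR (M : Matrix (Fin n) (Fin n) ℝ) : Prop :=
  ∀ z : ℂ, (M.map (Complex.ofReal)).charpoly.IsRoot z → 1 < ‖z‖

/-- An integer matrix is expanding if all of its complex eigenvalues have modulus > 1. -/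
def IsExpanding (M : Matrix (Fin n) (Fin n) ℤ) : Prop :=
  IsExpandingR (toR M)

/-- Standard inner product on `ℝ^n`. -/
def dotR (x y : Fin n → ℝ) : ℝ := ∑ i, x i * y i

/-- The exponential function `e_λ(x) = e^{2πi⟨λ,x⟩}`. -/
def expFun (lam : Fin n → ℝ) : (Fin n → ℝ) → ℂ :=
  fun x => Complex.exp (2 * Real.pi * Complex.I * (dotR lam x))

/-- Mask polynomial of a finite real digit set. -/
def maskR (D : Finset (Fin n → ℝ)) (x : Fin n → ℝ) : ℂ :=
  (D.card : ℂ)⁻¹ * ∑ d ∈ D, Complex.exp (2 * Real.pi * Complex.I * (dotR d x))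

/-- Zero set of the mask polynomial of a real digit set. -/
def maskZR (D : Finset (Fin n → ℝ)) : Set (Fin n → ℝ) := {x | maskR D x = 0}

/-- Mask polynomial of a finite integer digit set. -/
def mask (D : Finset (Fin n → ℤ)) (x : Fin n → ℝ) : ℂ :=
  (D.card : ℂ)⁻¹ * ∑ d ∈ D, Complex.exp (2 * Real.pi * Complex.I * (dotR (vecR d) x))

/-- Zero set `Z(m_D)` of the mask polynomial of an integer digit set. -/
def maskZ (D : Finset (Fin n → ℤ)) : Set (Fin n → ℝ) := {x | mask D x = 0}

/-- `Z_D^n := Z(m_D) ∩ [0,1)^n`. -/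
def ZDn (D : Finset (Fin n → ℤ)) : Set (Fin n → ℝ) :=
  maskZ D ∩ {x | ∀ i, 0 ≤ x i ∧ x i < 1}

/-- `E̊_p^n := (1/p){(l₁,…,l_n) : 0 ≤ lᵢ ≤ p-1} \ {0}`. -/
def Ering (p n : ℕ) : Set (Fin n → ℝ) :=
  {x | (∃ l : Fin n → ℕ, (∀ i, l i ≤ p - 1) ∧ ∀ i, x i = (l i : ℝ) / p) ∧ x ≠ 0}

/-- The integer lattice `ℤ^n` inside `ℝ^n`. -/
def latticeZ (n : ℕ) : Set (Fin n → ℝ) := {x | ∀ i, ∃ k : ℤ, x i = (k : ℝ)}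

/-- `μ` is the self-affine measure generated by the real expanding matrix `M`
and the real digit set `D`: it is a Borel probability measure satisfying
`μ = (1/|D|) ∑_{d∈D} μ ∘ φ_d⁻¹` with `φ_d(x) = M⁻¹(x+d)`. -/
def IsSelfAffineR (M : Matrix (Fin n) (Fin n) ℝ) (D : Finset (Fin n → ℝ))
    (μ : Measure (Fin n → ℝ)) : Prop :=
  IsProbabilityMeasure μ ∧
    μ = (D.card : ℝ≥0∞)⁻¹ • ∑ d ∈ D, μ.map (fun x => M⁻¹.mulVec (x + d))

/-- `μ` is the self-affine measure generated by the integer expanding matrix `M`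
and the integer digit set `D`. -/
def IsSelfAffine (M : Matrix (Fin n) (Fin n) ℤ) (D : Finset (Fin n → ℤ))
    (μ : Measure (Fin n → ℝ)) : Prop :=
  IsProbabilityMeasure μ ∧
    μ = (D.card : ℝ≥0∞)⁻¹ • ∑ d ∈ D, μ.map (fun x => (toR M)⁻¹.mulVec (x + vecR d))

/-- Fourier transform `μ̂(ξ) = ∫ e^{2πi⟨x,ξ⟩} dμ(x)`. -/
def FT (μ : Measure (Fin n → ℝ)) (ξ : Fin n → ℝ) : ℂ :=
  ∫ x, Complex.exp (2 * Real.pi * Complex.I * (dotR x ξ)) ∂μ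

/-- The family of exponentials `E(Λ)` is mutually orthogonal in `L²(μ)`:
`μ̂(λ - λ') = 0` for all distinct `λ, λ' ∈ Λ`. -/
def OrthExp (μ : Measure (Fin n → ℝ)) (Λ : Set (Fin n → ℝ)) : Prop :=
  ∀ a ∈ Λ, ∀ b ∈ Λ, a ≠ b → FT μ (a - b) = 0

/-- `Λ` is a spectrum of `μ`: the exponentials `{e^{2πi⟨λ,x⟩} : λ ∈ Λ}` form an
orthonormal (Hilbert) basis of `L²(μ)`. -/
def IsSpectrum (μ : Measure (Fin n → ℝ)) (Λ : Set (Fin n → ℝ)) : Prop :=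
  ∃ b : HilbertBasis Λ ℂ (Lp ℂ 2 μ), ∀ l : Λ, (b l : Lp ℂ 2 μ) =ᵐ[μ] expFun (l : Fin n → ℝ)

/-- `μ` is a spectral measure. -/
def IsSpectralMeasure (μ : Measure (Fin n → ℝ)) : Prop :=
  ∃ Λ : Set (Fin n → ℝ), Λ.Countable ∧ IsSpectrum μ Λ

/-- `(M, D)` is admissible: there is `S ⊂ ℤ^n` with `|S| = |D|` such that
`H = (1/√|S|)[e^{2πi⟨M⁻¹d,s⟩}]_{d∈D,s∈S}` satisfies `H^*H = I`. -/
def Admissible (M : Matrix (Fin n) (Fin n) ℤ) (D : Finset (Fin n → ℤ)) : Prop :=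
  ∃ S : Finset (Fin n → ℤ), S.card = D.card ∧
    letI H : Matrix {d // d ∈ D} {s // s ∈ S} ℂ := fun d s =>
      ((1 : ℂ) / (Real.sqrt S.card : ℂ)) *
        Complex.exp (2 * Real.pi * Complex.I *
          (dotR ((toR M)⁻¹.mulVec (vecR (d : Fin n → ℤ))) (vecR (s : Fin n → ℤ))))
    Hᴴ * H = 1

/-- Two matrices are congruent entrywise modulo `p`. -/
def ModEq (p : ℕ) (A B : Matrix (Fin n) (Fin n) ℤ) : Prop :=
  ∀ i j, (p : ℤ) ∣ (A i j - B i j)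

/-- `(M, D)` and `(M̃, D̃)` are conjugate in `GL_n(p)`: there are integer matrices
`A, B` with determinants prime to `p`, `AB ≡ I (mod p)`, `M̃ = AMB`, and either
`D = B D̃` or `D̃ = A D`. -/
def ConjugateGL (p : ℕ) (M Mt : Matrix (Fin n) (Fin n) ℤ)
    (D Dt : Finset (Fin n → ℤ)) : Prop :=
  ∃ A B : Matrix (Fin n) (Fin n) ℤ,
    ¬ (p : ℤ) ∣ A.det ∧ ¬ (p : ℤ) ∣ B.det ∧ ModEq p (A * B) 1 ∧ Mt = A * M * B ∧
      ((∀ d, d ∈ D ↔ ∃ dt ∈ Dt, d = B.mulVec dt) ∨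
       (∀ dt, dt ∈ Dt ↔ ∃ d ∈ D, dt = A.mulVec d))
/-! Since `D = B D̃`, the mask polynomials satisfy `m_D(x) = m_{D̃}(Bᵀx)`, and both are
`ℤⁿ`-periodic. The hypothesis on `Z_{D̃}` puts every zero of `m_{D̃}` into `(1/p)ℤⁿ`, on which an
integer matrix acts modulo `ℤⁿ` only through its reduction mod `p`. Since `AᵀBᵀ ≡ I (mod p)`,
`M̃ᵀ = BᵀMᵀAᵀ` then satisfies `M̃ᵀʲBᵀ ≡ BᵀMᵀʲ` and `AᵀM̃ᵀʲ ≡ MᵀʲAᵀ`, so `x ↦ fract(Bᵀx)` and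
`y ↦ fract(Aᵀy)` carry solutions for one side to solutions for the other with the same `j`.
A zero `x` of `m_D` need not lie in `(1/p)ℤⁿ` itself, only `Bᵀx` does; so the congruence is applied
to `(det B) x = adj(Bᵀ) Bᵀx`, and the factor `det B`, prime to `p`, is cancelled at the end. -/

lemma toR_mul (P Q : Matrix (Fin n) (Fin n) ℤ) : toR (P * Q) = toR P * toR Q :=
  map_mul (Int.castRingHom ℝ).mapMatrix P Q

lemma toR_pow (P : Matrix (Fin n) (Fin n) ℤ) (k : ℕ) : toR (P ^ k) = toR P ^ k :=
  map_pow (Int.castRingHom ℝ).mapMatrix P k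

lemma toR_transpose (P : Matrix (Fin n) (Fin n) ℤ) : toR Pᵀ = (toR P)ᵀ := rfl

lemma toR_one : toR (1 : Matrix (Fin n) (Fin n) ℤ) = 1 := map_one (Int.castRingHom ℝ).mapMatrix

lemma toR_zsmul (c : ℤ) (P : Matrix (Fin n) (Fin n) ℤ) : toR (c • P) = c • toR P :=
  map_zsmul (Int.castRingHom ℝ).mapMatrix c P

lemma toR_mulVec_vecR (P : Matrix (Fin n) (Fin n) ℤ) (v : Fin n → ℤ) :
    toR P *ᵥ vecR v = vecR (P *ᵥ v) :=
  funext fun i => ((Int.castRingHom ℝ).map_mulVec P v i).symm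

lemma dotR_vecR_mulVec (B : Matrix (Fin n) (Fin n) ℤ) (d : Fin n → ℤ) (x : Fin n → ℝ) :
    dotR (vecR (B *ᵥ d)) x = dotR (vecR d) (toR Bᵀ *ᵥ x) := by
  change vecR (B *ᵥ d) ⬝ᵥ x = vecR d ⬝ᵥ (toR Bᵀ *ᵥ x)
  rw [dotProduct_mulVec, toR_transpose, vecMul_transpose, toR_mulVec_vecR]

def intLattice (n : ℕ) : AddSubgroup (Fin n → ℝ) :=
  (AddMonoidHom.compLeft (Int.castAddHom ℝ) (Fin n)).range

lemma mem_intLattice_iff {x : Fin n → ℝ} : x ∈ intLattice n ↔ x ∈ latticeZ n := by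
  refine ⟨?_, fun h => ?_⟩
  · rintro ⟨v, rfl⟩ i
    exact ⟨v i, rfl⟩
  · choose v hv using h
    exact ⟨v, funext fun i => (hv i).symm⟩

lemma vecR_mem_intLattice (v : Fin n → ℤ) : vecR v ∈ intLattice n := ⟨v, rfl⟩

lemma toR_mulVec_mem_intLattice (Q : Matrix (Fin n) (Fin n) ℤ) {x : Fin n → ℝ}
    (hx : x ∈ intLattice n) : toR Q *ᵥ x ∈ intLattice n := by
  obtain ⟨v, rfl⟩ := hx
  exact toR_mulVec_vecR Q v ▸ vecR_mem_intLattice _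

/-- The lattice `(1/p) ℤ^n`. -/
def scaledLattice (p n : ℕ) : AddSubgroup (Fin n → ℝ) :=
  (intLattice n).comap (DistribSMul.toAddMonoidHom (Fin n → ℝ) (p : ℤ))

lemma mem_scaledLattice_iff {p : ℕ} {x : Fin n → ℝ} :
    x ∈ scaledLattice p n ↔ (p : ℤ) • x ∈ intLattice n := Iff.rfl

lemma intLattice_le_scaledLattice (p : ℕ) : intLattice n ≤ scaledLattice p n :=
  fun _ hx => zsmul_mem hx _

lemma toR_mulVec_mem_scaledLattice {p : ℕ} (Q : Matrix (Fin n) (Fin n) ℤ) {x : Fin n → ℝ}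
    (hx : x ∈ scaledLattice p n) : toR Q *ᵥ x ∈ scaledLattice p n := by
  rw [mem_scaledLattice_iff, ← mulVec_smul]
  exact toR_mulVec_mem_intLattice Q hx

lemma mem_intLattice_of_zsmul_mem {p : ℕ} {c : ℤ} (hc : IsCoprime (p : ℤ) c) {x : Fin n → ℝ}
    (hx : x ∈ scaledLattice p n) (hcx : c • x ∈ intLattice n) : x ∈ intLattice n := by
  obtain ⟨s, t, hst⟩ := hc
  have hx' : x = s • ((p : ℤ) • x) + t • (c • x) := by
    rw [smul_smul, smul_smul, ← add_smul, hst, one_smul]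
  rw [hx']
  exact add_mem (zsmul_mem (mem_scaledLattice_iff.1 hx) s) (zsmul_mem hcx t)

lemma modEq_iff_map_eq {p : ℕ} {X Y : Matrix (Fin n) (Fin n) ℤ} :
    ModEq p X Y ↔
      (Int.castRingHom (ZMod p)).mapMatrix X = (Int.castRingHom (ZMod p)).mapMatrix Y := by
  simp only [ModEq, RingHom.mapMatrix_apply, ← Matrix.ext_iff, map_apply, eq_intCast,
    ZMod.intCast_eq_intCast_iff_dvd_sub, dvd_sub_comm]

lemma exists_sub_eq_smul_of_modEq {p : ℕ} {X Y : Matrix (Fin n) (Fin n) ℤ} (h : ModEq p X Y) :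
    ∃ K : Matrix (Fin n) (Fin n) ℤ, X - Y = (p : ℤ) • K := by
  choose K hK using h
  exact ⟨K, Matrix.ext fun i j => hK i j⟩

lemma toR_mulVec_sub_mem_intLattice {p : ℕ} {X Y : Matrix (Fin n) (Fin n) ℤ} (h : ModEq p X Y)
    {x : Fin n → ℝ} (hx : x ∈ scaledLattice p n) : toR X *ᵥ x - toR Y *ᵥ x ∈ intLattice n := by
  obtain ⟨K, hK⟩ := exists_sub_eq_smul_of_modEq h
  have hXY : toR X - toR Y = (p : ℤ) • toR K := by
    ext i j
    simpa [toR] using congr_arg (Int.cast : ℤ → ℝ) (congr_fun₂ hK i j)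
  rw [← sub_mulVec, hXY, smul_mulVec, ← mulVec_smul]
  exact toR_mulVec_mem_intLattice K hx

section ModEq

variable {p : ℕ} {X Y E : Matrix (Fin n) (Fin n) ℤ}

lemma ModEq.transpose (h : ModEq p X Y) : ModEq p Xᵀ Yᵀ := fun i j => h j i

lemma ModEq.transpose_mul_transpose_of_eq_one (h : ModEq p (X * Y) 1) :
    ModEq p (Xᵀ * Yᵀ) 1 := by
  have hYX : ModEq p (Y * X) 1 := by
    rw [modEq_iff_map_eq, map_mul, map_one] at h ⊢
    exact mul_eq_one_comm.mp h
  simpa only [transpose_mul, transpose_one] using hYX.transpose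

lemma ModEq.mul_pow_of_eq_one (hE : ModEq p E 1) (j : ℕ) : ModEq p ((X * E) ^ j) (X ^ j) := by
  rw [modEq_iff_map_eq, map_one] at hE
  rw [modEq_iff_map_eq, map_pow, map_pow, map_mul, hE, mul_one]

lemma ModEq.pow_mul_of_eq_one (hE : ModEq p E 1) (j : ℕ) : ModEq p ((E * X) ^ j) (X ^ j) := by
  rw [modEq_iff_map_eq, map_one] at hE
  rw [modEq_iff_map_eq, map_pow, map_pow, map_mul, hE, one_mul]

end ModEq

lemma mask_eq_of_sub_mem_intLattice (D : Finset (Fin n → ℤ)) {x y : Fin n → ℝ}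
    (h : x - y ∈ intLattice n) : mask D x = mask D y := by
  obtain ⟨v, hv⟩ := h
  have hx : x = y + vecR v := by rw [← sub_eq_iff_eq_add']; exact hv.symm
  unfold mask
  congr 1
  refine Finset.sum_congr rfl fun d _ => ?_
  have hdot : dotR (vecR d) x = dotR (vecR d) y + ((d ⬝ᵥ v : ℤ) : ℝ) := by
    simp [hx, dotR, vecR, dotProduct, mul_add, Finset.sum_add_distrib]
  have hper : Complex.exp (2 * π * I * ((d ⬝ᵥ v : ℤ) : ℝ)) = 1 := by
    rw [← Complex.exp_int_mul_two_pi_mul_I (d ⬝ᵥ v)]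
    push_cast
    ring_nf
  rw [hdot, Complex.ofReal_add, mul_add, Complex.exp_add, hper, mul_one]

lemma mask_eq_mask_mulVec {B : Matrix (Fin n) (Fin n) ℤ} (hB : B.det ≠ 0)
    {D Dt : Finset (Fin n → ℤ)} (hDeq : ∀ d, d ∈ D ↔ ∃ dt ∈ Dt, d = B.mulVec dt)
    (x : Fin n → ℝ) : mask D x = mask Dt (toR Bᵀ *ᵥ x) := by
  have hinj : Function.Injective B.mulVec := mulVec_injective_of_det_ne_zero hB
  obtain rfl : D = Dt.image B.mulVec := by
    ext d
    simp [hDeq, eq_comm]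
  unfold mask
  rw [Finset.card_image_of_injective _ hinj, Finset.sum_image hinj.injOn]
  simp_rw [dotR_vecR_mulVec]

def fractVec (x : Fin n → ℝ) : Fin n → ℝ := fun i => Int.fract (x i)

lemma sub_fractVec_mem_intLattice (x : Fin n → ℝ) : x - fractVec x ∈ intLattice n :=
  mem_intLattice_iff.2 fun i => ⟨⌊x i⌋, Int.self_sub_fract (x i)⟩

lemma fractVec_mem_ZDn {D : Finset (Fin n → ℤ)} {x : Fin n → ℝ} (h : mask D x = 0) :
    fractVec x ∈ ZDn D := by
  refine ⟨?_, fun i => ⟨Int.fract_nonneg _, Int.fract_lt_one _⟩⟩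
  have hsub : fractVec x - x ∈ intLattice n := by
    simpa using neg_mem (sub_fractVec_mem_intLattice x)
  exact (mask_eq_of_sub_mem_intLattice D hsub).trans h

lemma Ering_subset_scaledLattice {p : ℕ} (hp : p ≠ 0) : Ering p n ⊆ scaledLattice p n := by
  rintro x ⟨⟨l, -, hxl⟩, -⟩
  refine mem_intLattice_iff.2 fun i => ⟨l i, ?_⟩
  simpa [hxl i] using mul_div_cancel₀ (l i : ℝ) (Nat.cast_ne_zero.2 hp)

lemma mem_scaledLattice_of_mask_eq_zero {p : ℕ} (hp : p ≠ 0) {D : Finset (Fin n → ℤ)}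
    (hZ : ZDn D ⊆ Ering p n) {y : Fin n → ℝ} (h : mask D y = 0) : y ∈ scaledLattice p n := by
  simpa using add_mem (intLattice_le_scaledLattice p (sub_fractVec_mem_intLattice y))
    (Ering_subset_scaledLattice hp (hZ (fractVec_mem_ZDn h)))

lemma toR_mulVec_mem_intLattice_iff_of_modEq {p : ℕ} {X Y : Matrix (Fin n) (Fin n) ℤ}
    (h : ModEq p X Y) {x : Fin n → ℝ} (hx : x ∈ scaledLattice p n) :
    toR X *ᵥ x ∈ intLattice n ↔ toR Y *ᵥ x ∈ intLattice n :=
  ⟨fun hX => by simpa using sub_mem hX (toR_mulVec_sub_mem_intLattice h hx),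
    fun hY => by simpa using add_mem (toR_mulVec_sub_mem_intLattice h hx) hY⟩

/-- `(Mᵀ)ʲ Z_D^n ∩ ℤ^n ≠ ∅`. -/
def HitsLattice (M : Matrix (Fin n) (Fin n) ℤ) (D : Finset (Fin n → ℤ)) (j : ℕ) : Prop :=
  ∃ x ∈ ZDn D, ((toR M)ᵀ ^ j).mulVec x ∈ latticeZ n

lemma hitsLattice_iff {M : Matrix (Fin n) (Fin n) ℤ} {D : Finset (Fin n → ℤ)} {j : ℕ} :
    HitsLattice M D j ↔ ∃ x ∈ ZDn D, toR (Mᵀ ^ j) *ᵥ x ∈ intLattice n := by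
  simp only [HitsLattice, toR_pow, toR_transpose, mem_intLattice_iff]

section Conjugate

variable {p : ℕ} {M A B : Matrix (Fin n) (Fin n) ℤ} {D Dt : Finset (Fin n → ℤ)} {j : ℕ}

lemma HitsLattice.conj (hp : p.Prime) (hB : ¬ (p : ℤ) ∣ B.det) (hAB : ModEq p (A * B) 1)
    (hDeq : ∀ d, d ∈ D ↔ ∃ dt ∈ Dt, d = B.mulVec dt) (hZ : ZDn Dt ⊆ Ering p n)
    (h : HitsLattice M D j) : HitsLattice (A * M * B) Dt j := by
  rw [hitsLattice_iff] at h ⊢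
  obtain ⟨x, ⟨hx0, -⟩, hxL⟩ := h
  have hBdet : B.det ≠ 0 := fun h0 => hB (h0 ▸ dvd_zero _)
  set w := toR Bᵀ *ᵥ x
  have hw0 : mask Dt w = 0 := (mask_eq_mask_mulVec hBdet hDeq x).symm.trans hx0
  have hw : w ∈ scaledLattice p n := mem_scaledLattice_of_mask_eq_zero hp.ne_zero hZ hw0
  refine ⟨fractVec w, fractVec_mem_ZDn hw0, ?_⟩
  have hu : B.det • x ∈ scaledLattice p n := by
    have hadj : toR Bᵀ.adjugate *ᵥ w = B.det • x := by
      rw [mulVec_mulVec, ← toR_mul, adjugate_mul, det_transpose, toR_zsmul, toR_one,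
        smul_mulVec, one_mulVec]
    exact hadj ▸ toR_mulVec_mem_scaledLattice _ hw
  have hMu : toR (Mᵀ ^ j) *ᵥ (B.det • x) ∈ intLattice n := by
    rw [mulVec_smul]
    exact zsmul_mem hxL _
  have hEu : toR ((Mᵀ * (Aᵀ * Bᵀ)) ^ j) *ᵥ (B.det • x) ∈ intLattice n :=
    (toR_mulVec_mem_intLattice_iff_of_modEq
      (hAB.transpose_mul_transpose_of_eq_one.mul_pow_of_eq_one j) hu).2 hMu
  have hTw : B.det • (toR (((A * M * B)ᵀ) ^ j) *ᵥ w) ∈ intLattice n := by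
    have hcomm : Bᵀ * (Mᵀ * (Aᵀ * Bᵀ)) ^ j = ((A * M * B)ᵀ) ^ j * Bᵀ := by
      rw [transpose_mul, transpose_mul, mul_pow_mul, mul_assoc Mᵀ]
    have := toR_mulVec_mem_intLattice Bᵀ hEu
    rwa [mulVec_mulVec, ← toR_mul, hcomm, toR_mul, ← mulVec_mulVec, mulVec_smul,
      mulVec_smul] at this
  have hcop : IsCoprime (p : ℤ) B.det :=
    (Prime.coprime_iff_not_dvd (Nat.prime_iff_prime_int.mp hp)).mpr hB
  have hTw' : toR (((A * M * B)ᵀ) ^ j) *ᵥ w ∈ intLattice n :=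
    mem_intLattice_of_zsmul_mem hcop (toR_mulVec_mem_scaledLattice _ hw) hTw
  have := sub_mem hTw'
    (toR_mulVec_mem_intLattice (((A * M * B)ᵀ) ^ j) (sub_fractVec_mem_intLattice w))
  rwa [mulVec_sub, sub_sub_cancel] at this

lemma HitsLattice.of_conj (hp : p ≠ 0) (hB : B.det ≠ 0) (hAB : ModEq p (A * B) 1)
    (hDeq : ∀ d, d ∈ D ↔ ∃ dt ∈ Dt, d = B.mulVec dt) (hZ : ZDn Dt ⊆ Ering p n)
    (h : HitsLattice (A * M * B) Dt j) : HitsLattice M D j := by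
  rw [hitsLattice_iff] at h ⊢
  obtain ⟨y, ⟨hy0, -⟩, hyL⟩ := h
  have hy : y ∈ scaledLattice p n := mem_scaledLattice_of_mask_eq_zero hp hZ hy0
  set x := toR Aᵀ *ᵥ y
  have hx0 : mask D x = 0 := by
    have hBA : toR (Bᵀ * Aᵀ) *ᵥ y - y ∈ intLattice n := by
      simpa only [transpose_mul, transpose_one, toR_one, one_mulVec] using
        toR_mulVec_sub_mem_intLattice hAB.transpose hy
    rw [mask_eq_mask_mulVec hB hDeq, mulVec_mulVec, ← toR_mul]
    exact (mask_eq_of_sub_mem_intLattice Dt hBA).trans hy0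
  refine ⟨fractVec x, fractVec_mem_ZDn hx0, ?_⟩
  have hxL : toR (Mᵀ ^ j) *ᵥ x ∈ intLattice n := by
    have hcomm : Aᵀ * ((A * M * B)ᵀ) ^ j = (Aᵀ * Bᵀ * Mᵀ) ^ j * Aᵀ := by
      rw [transpose_mul, transpose_mul, mul_assoc Aᵀ, mul_pow_mul, mul_assoc Bᵀ]
    have := toR_mulVec_mem_intLattice Aᵀ hyL
    rw [mulVec_mulVec, ← toR_mul, hcomm, toR_mul, ← mulVec_mulVec] at this
    exact (toR_mulVec_mem_intLattice_iff_of_modEq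
      (hAB.transpose_mul_transpose_of_eq_one.pow_mul_of_eq_one j)
      (toR_mulVec_mem_scaledLattice _ hy)).1 this
  have := sub_mem hxL (toR_mulVec_mem_intLattice (Mᵀ ^ j) (sub_fractVec_mem_intLattice x))
  rwa [mulVec_sub, sub_sub_cancel] at this

end Conjugate

theorem hits_lattice_iff_general {n : ℕ} {p : ℕ} (hp : p.Prime)
    (M Mt : Matrix (Fin n) (Fin n) ℤ)
    (D Dt : Finset (Fin n → ℤ)) (A B : Matrix (Fin n) (Fin n) ℤ)
    (hB : ¬ (p : ℤ) ∣ B.det)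
    (hAB : ModEq p (A * B) 1) (hMteq : Mt = A * M * B)
    (hDeq : ∀ d, d ∈ D ↔ ∃ dt ∈ Dt, d = B.mulVec dt)
    (hZ : ZDn Dt ⊆ Ering p n) :
    (∃ j : ℕ, 1 ≤ j ∧ ∃ x ∈ ZDn D, ((toR M)ᵀ ^ j).mulVec x ∈ latticeZ n) ↔
      (∃ j : ℕ, 1 ≤ j ∧ ∃ y ∈ ZDn Dt, ((toR Mt)ᵀ ^ j).mulVec y ∈ latticeZ n) := by
  subst hMteq
  have hBdet : B.det ≠ 0 := fun h0 => hB (h0 ▸ dvd_zero _)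
  have hits (j : ℕ) : HitsLattice M D j ↔ HitsLattice (A * M * B) Dt j :=
    ⟨HitsLattice.conj hp hB hAB hDeq hZ, HitsLattice.of_conj hp.ne_zero hBdet hAB hDeq hZ⟩
  exact exists_congr fun j => and_congr_right fun _ => hits j

/-- `(M^t)^j Z_D^n` meets `ℤ^n` for some `j ≥ 1` iff
`(M̃^t)^{j̃} Z_{D̃}^n` meets `ℤ^n` for some `j̃ ≥ 1`. -/
theorem hits_lattice_iff {n : ℕ} {p : ℕ} (hp : p.Prime)
    (M Mt : Matrix (Fin n) (Fin n) ℤ) (hM : IsExpanding M) (hMt : IsExpanding Mt)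
    (D Dt : Finset (Fin n → ℤ)) (A B : Matrix (Fin n) (Fin n) ℤ)
    (hA : ¬ (p : ℤ) ∣ A.det) (hB : ¬ (p : ℤ) ∣ B.det)
    (hAB : ModEq p (A * B) 1) (hMteq : Mt = A * M * B)
    (hDeq : ∀ d, d ∈ D ↔ ∃ dt ∈ Dt, d = B.mulVec dt)
    (hZ : ZDn Dt ⊆ Ering p n) :
    (∃ j : ℕ, 1 ≤ j ∧ ∃ x ∈ ZDn D, ((toR M)ᵀ ^ j).mulVec x ∈ latticeZ n) ↔
      (∃ j : ℕ, 1 ≤ j ∧ ∃ y ∈ ZDn Dt, ((toR Mt)ᵀ ^ j).mulVec y ∈ latticeZ n) :=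
  hits_lattice_iff_general hp M Mt D Dt A B hB hAB hMteq hDeq hZ

end SA
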